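/- (Barbălat's lemma) Let f be a nonnegative function defined on [0, ∞) such that f is integrable on [0, ∞) and uniformly continuous on [0, ∞). Then lim_{t→∞} f(t) = 0. -/

import Mathlib

/-!
If `‖f t‖ ≥ ε` at arbitrarily late times `t`, uniform continuity keeps `‖f‖ ≥ ε / 2` on a
window `[t, t + δ / 2]` of fixed length, so each such window carries at least `ε δ / 4` of the
integral of `‖f‖`. But integrability forces the integral of `‖f‖` over windows of fixed length
to tend to `0`, since it is a difference of two primitives converging to the same limit.
-/

open Set Filter MeasureTheory
open scoped Topology

theorem tendsto_intervalIntegral_add_atTop_of_integrableOn_Ioi {E : Type*}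
    [NormedAddCommGroup E] [NormedSpace ℝ E] {μ : Measure ℝ} {f : ℝ → E} {a : ℝ}
    (hf : IntegrableOn f (Ioi a) μ) (h : ℝ) :
    Tendsto (fun t => ∫ x in t..t + h, f x ∂μ) atTop (𝓝 0) := by
  have hF := intervalIntegral_tendsto_integral_Ioi a hf tendsto_id
  have hint : ∀ b, a ≤ b → IntervalIntegrable f μ a b := fun b hb =>
    (intervalIntegrable_iff_integrableOn_Ioc_of_le hb).2 (hf.mono_set Ioc_subset_Ioi_self)
  have hdiff : ∀ᶠ t in atTop,
      (∫ x in a..t + h, f x ∂μ) - (∫ x in a..t, f x ∂μ) = ∫ x in t..t + h, f x ∂μ := by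
    filter_upwards [eventually_ge_atTop (a + |h|)] with t ht
    exact intervalIntegral.integral_interval_sub_left
      (hint _ (by linarith [neg_abs_le h, abs_nonneg h])) (hint _ (by linarith [abs_nonneg h]))
  simpa using ((hF.comp (tendsto_atTop_add_const_right _ h tendsto_id)).sub hF).congr' hdiff

theorem tendsto_zero_of_integrableOn_Ici_of_uniformContinuousOn {E : Type*}
    [NormedAddCommGroup E] {f : ℝ → E} {a : ℝ}
    (hint : IntegrableOn f (Ici a)) (hUC : UniformContinuousOn f (Ici a)) :
    Tendsto f atTop (𝓝 0) := by
  rw [tendsto_zero_iff_norm_tendsto_zero, Metric.tendsto_atTop]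
  intro ε hε
  obtain ⟨δ, hδ, hδf⟩ := Metric.uniformContinuousOn_iff.1 hUC (ε / 2) (half_pos hε)
  have hnorm : IntegrableOn (fun x => ‖f x‖) (Ioi a) := (hint.mono_set Ioi_subset_Ici_self).norm
  obtain ⟨T, hT⟩ := eventually_atTop.1 <|
    (tendsto_intervalIntegral_add_atTop_of_integrableOn_Ioi hnorm (δ / 2)).eventually
      (eventually_lt_nhds (by positivity : (0 : ℝ) < ε / 2 * (δ / 2)))
  refine ⟨max T a, fun t ht => ?_⟩
  have hta : a ≤ t := le_of_max_le_right ht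
  rw [Real.dist_0_eq_abs, abs_norm]
  by_contra! hft
  have hlow : ∀ x ∈ Icc t (t + δ / 2), ε / 2 ≤ ‖f x‖ := by
    intro x hx
    have hdist : dist x t < δ := by
      rw [Real.dist_eq, abs_of_nonneg (by linarith [hx.1])]; linarith [hx.2]
    have := hδf x (hta.trans hx.1) t hta hdist
    rw [dist_eq_norm] at this
    linarith [norm_sub_norm_le (f t) (f x), norm_sub_rev (f x) (f t)]
  have hwindow : ε / 2 * (δ / 2) ≤ ∫ x in t..t + δ / 2, ‖f x‖ := by
    have hle : t ≤ t + δ / 2 := by linarith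
    have := intervalIntegral.integral_mono_on hle intervalIntegrable_const
      ((intervalIntegrable_iff_integrableOn_Ioc_of_le hle).2
        (hnorm.mono_set fun x hx => hta.trans_lt hx.1)) hlow
    rwa [intervalIntegral.integral_const, smul_eq_mul, add_sub_cancel_left, mul_comm] at this
  linarith [hT t (le_of_max_le_left ht), hwindow]

theorem barbalat_general (f : ℝ → ℝ)
    (hint : IntegrableOn f (Set.Ici 0))
    (hUC : UniformContinuousOn f (Set.Ici 0)) :
    Tendsto f atTop (nhds 0) :=
  tendsto_zero_of_integrableOn_Ici_of_uniformContinuousOn hint hUC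

/-- **Barbălat's lemma, Lemma 2.4.** If `f` is nonnegative on `[0, ∞)`,
Lebesgue integrable on `[0, ∞)` and uniformly continuous on `[0, ∞)`, then
`f(t) → 0` as `t → ∞`. -/
theorem barbalat (f : ℝ → ℝ)
    (hnn : ∀ t, 0 ≤ t → 0 ≤ f t)
    (hint : IntegrableOn f (Set.Ici 0))
    (hUC : UniformContinuousOn f (Set.Ici 0)) :
    Tendsto f atTop (nhds 0) :=
  barbalat_general f hint hUC
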